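/- Let a, b ≥ 1 be integers and let ξ_{a,b} be the permutation of {1,…,a+b} consisting of the two cycles (1 2 … a)(a+1 a+2 … a+b). Then the number of permutations σ of {1,…,a+b} such that the subgroup generated by ξ_{a,b} and σ acts transitively on {1,…,a+b} equals (a+b)! − a!·b!. -/

import Mathlib

/-!
Colour each point of `{1, …, a+b}` by the block of `ξ_{a,b}` it lies in. Since the two blocks are
exactly the cycles of `ξ_{a,b}`, a permutation σ either preserves the colouring, in which case so
does the whole group `⟨ξ_{a,b}, σ⟩`, or it moves some point `x` to the other block, in which case
powers of `ξ_{a,b}` carry `x` to every point of its own block and `σ x` to every point of the other.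
So `⟨ξ_{a,b}, σ⟩` is transitive exactly when σ does not preserve the colouring, and the
colour-preserving permutations are the `a! * b!` elements of `Sym_a × Sym_b`.
-/

/-- The permutation ξ_{a,b} of {1,…,a+b} consisting of the two cycles
(1 2 … a)(a+1 a+2 … a+b). -/
def xiab (a b : ℕ) : Equiv.Perm (Fin (a + b)) :=
  finSumFinEquiv.symm.trans ((Equiv.sumCongr (finRotate a) (finRotate b)).trans finSumFinEquiv)

open Equiv Function Subgroup Nat

namespace Equiv.Perm

section SameCycle

variable {α β : Type*}

lemma sumCongr_zpow (f : Perm α) (g : Perm β) (n : ℤ) :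
    sumCongr f g ^ n = sumCongr (f ^ n) (g ^ n) := by
  simpa using (map_zpow (sumCongrHom α β) (f, g) n).symm

lemma permCongr_zpow (e : α ≃ β) (p : Perm α) (n : ℤ) :
    e.permCongr p ^ n = e.permCongr (p ^ n) :=
  (map_zpow e.permCongrHom p n).symm

lemma sameCycle_permCongr (e : α ≃ β) (p : Perm α) {x y : β} :
    (e.permCongr p).SameCycle x y ↔ p.SameCycle (e.symm x) (e.symm y) := by
  simp only [SameCycle, permCongr_zpow, permCongr_apply, ← e.eq_symm_apply]

lemma sameCycle_sumCongr_inl (f : Perm α) (g : Perm β) {x y : α} :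
    (sumCongr f g).SameCycle (.inl x) (.inl y) ↔ f.SameCycle x y := by
  simp [SameCycle, sumCongr_zpow]

lemma sameCycle_sumCongr_inr (f : Perm α) (g : Perm β) {x y : β} :
    (sumCongr f g).SameCycle (.inr x) (.inr y) ↔ g.SameCycle x y := by
  simp [SameCycle, sumCongr_zpow]

lemma not_sameCycle_sumCongr_inl_inr (f : Perm α) (g : Perm β) (x : α) (y : β) :
    ¬(sumCongr f g).SameCycle (.inl x) (.inr y) := by
  simp [SameCycle, sumCongr_zpow]

lemma sameCycle_sumCongr_iff_isLeft_eq {f : Perm α} {g : Perm β}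
    (hf : ∀ x y, f.SameCycle x y) (hg : ∀ x y, g.SameCycle x y) {s t : α ⊕ β} :
    (sumCongr f g).SameCycle s t ↔ s.isLeft = t.isLeft := by
  rcases s with x | x <;> rcases t with y | y
  · simpa [sameCycle_sumCongr_inl] using hf x y
  · simpa using not_sameCycle_sumCongr_inl_inr f g x y
  · simpa [sameCycle_comm] using not_sameCycle_sumCongr_inl_inr f g y x
  · simpa [sameCycle_sumCongr_inr] using hg x y

end SameCycle

section TwoColouring

variable {α : Type*} {f : α → Bool} {ξ σ : Perm α}

lemma comp_eq_of_sameCycle_imp (hξ : ∀ x y, ξ.SameCycle x y → f x = f y) : f ∘ ξ = f :=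
  funext fun x => (hξ _ _ (SameCycle.refl ξ x).apply_right).symm

lemma comp_eq_of_mem_closure_pair (hξ : f ∘ ξ = f) (hσ : f ∘ σ = f) {g : Perm α}
    (hg : g ∈ closure {ξ, σ}) : f ∘ g = f := by
  induction hg using closure_induction with
  | mem g hg =>
    rcases hg with rfl | rfl
    exacts [hξ, hσ]
  | one => rfl
  | mul g h _ _ hg hh => rw [coe_mul, ← comp_assoc, hg, hh]
  | inv g _ hg => rw [← hg, comp_assoc, coe_inv, self_comp_symm, comp_id, hg]

lemma exists_mem_closure_pair_apply_eq (hξ : ∀ x y, ξ.SameCycle x y ↔ f x = f y) {x₀ : α}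
    (hσ : f (σ x₀) ≠ f x₀) (x y : α) : ∃ g ∈ closure {ξ, σ}, g x = y := by
  have hξ_mem : ξ ∈ closure {ξ, σ} := subset_closure (Set.mem_insert _ _)
  have hσ_mem : σ ∈ closure {ξ, σ} := subset_closure (Set.mem_insert_of_mem _ rfl)
  have from_x₀ : ∀ z, ∃ g ∈ closure {ξ, σ}, g x₀ = z := by
    intro z
    by_cases hz : f x₀ = f z
    · obtain ⟨n, hn⟩ := (hξ x₀ z).2 hz
      exact ⟨ξ ^ n, zpow_mem hξ_mem n, hn⟩
    · have hσz : f (σ x₀) = f z :=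
        (Bool.eq_not_of_ne hσ).trans (Bool.eq_not_of_ne (Ne.symm hz)).symm
      obtain ⟨n, hn⟩ := (hξ (σ x₀) z).2 hσz
      exact ⟨ξ ^ n * σ, mul_mem (zpow_mem hξ_mem n) hσ_mem, hn⟩
  obtain ⟨g, hg, rfl⟩ := from_x₀ x
  obtain ⟨h, hh, rfl⟩ := from_x₀ y
  exact ⟨h * g⁻¹, mul_mem hh (inv_mem hg), by simp⟩

theorem forall_exists_mem_closure_pair_apply_eq_iff (hξ : ∀ x y, ξ.SameCycle x y ↔ f x = f y)
    (hf : Surjective f) :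
    (∀ x y, ∃ g ∈ closure {ξ, σ}, g x = y) ↔ f ∘ σ ≠ f := by
  constructor
  · intro htrans hσ
    obtain ⟨x, hx⟩ := hf true
    obtain ⟨y, hy⟩ := hf false
    obtain ⟨g, hg, rfl⟩ := htrans x y
    have hfg := congrFun (comp_eq_of_mem_closure_pair
      (comp_eq_of_sameCycle_imp fun x y => (hξ x y).1) hσ hg) x
    rw [comp_apply, hx, hy] at hfg
    exact Bool.false_ne_true hfg
  · intro hσ
    obtain ⟨x₀, hx₀⟩ := not_forall.1 (mt funext hσ)
    exact exists_mem_closure_pair_apply_eq hξ hx₀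

theorem card_comp_eq_self [Fintype α] [DecidableEq α] (f : α → Bool) :
    Fintype.card {σ : Perm α // f ∘ σ = f} =
      (Fintype.card {x // f x = true})! * (Fintype.card {x // f x = false})! := by
  rw [DomMulAct.stabilizer_card, Fintype.prod_bool]

end TwoColouring

end Equiv.Perm

lemma sameCycle_finRotate {n : ℕ} (i j : Fin n) : (finRotate n).SameCycle i j := by
  have := i.neZero
  refine ⟨((j - i : Fin n) : ℕ), ?_⟩
  rw [zpow_natCast, Perm.coe_pow, ← finCycle_eq_finRotate_iterate, finCycle_apply, add_sub_cancel]

section Xiab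

variable {a b : ℕ}

lemma xiab_eq_permCongr :
    xiab a b = finSumFinEquiv.permCongr (sumCongr (finRotate a) (finRotate b)) :=
  rfl

lemma sameCycle_xiab_iff {x y : Fin (a + b)} :
    (xiab a b).SameCycle x y ↔
      (finSumFinEquiv.symm x).isLeft = (finSumFinEquiv.symm y).isLeft :=
  xiab_eq_permCongr ▸ (Perm.sameCycle_permCongr _ _).trans
    (Perm.sameCycle_sumCongr_iff_isLeft_eq sameCycle_finRotate sameCycle_finRotate)

lemma surjective_isLeft_finSumFinEquiv_symm (ha : 1 ≤ a) (hb : 1 ≤ b) :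
    Surjective fun x : Fin (a + b) => (finSumFinEquiv.symm x).isLeft
  | true => ⟨finSumFinEquiv (.inl ⟨0, ha⟩), by simp only [symm_apply_apply, Sum.isLeft_inl]⟩
  | false => ⟨finSumFinEquiv (.inr ⟨0, hb⟩), by simp only [symm_apply_apply, Sum.isLeft_inr]⟩

lemma card_isLeft_finSumFinEquiv_symm_eq_true :
    Fintype.card {x : Fin (a + b) // (finSumFinEquiv.symm x).isLeft = true} = a := by
  simpa using Fintype.card_congr ((finSumFinEquiv.symm.subtypeEquiv fun _ => Iff.rfl).trans
    (sumIsLeft (α := Fin a) (β := Fin b)))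

lemma card_isLeft_finSumFinEquiv_symm_eq_false :
    Fintype.card {x : Fin (a + b) // (finSumFinEquiv.symm x).isLeft = false} = b := by
  simpa using Fintype.card_congr ((finSumFinEquiv.symm.subtypeEquiv
    fun _ => Sum.isLeft_eq_false).trans (sumIsRight (α := Fin a) (β := Fin b)))

end Xiab

/-- The number of permutations σ of {1,…,a+b} such that the subgroup generated by ξ_{a,b}
and σ acts transitively on {1,…,a+b} equals (a+b)! − a!·b!. -/
theorem transitive_pair_count (a b : ℕ) (ha : 1 ≤ a) (hb : 1 ≤ b) :
    Nat.card {σ : Equiv.Perm (Fin (a + b)) //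
        ∀ i j : Fin (a + b), ∃ g ∈ Subgroup.closure {xiab a b, σ}, g i = j} =
      Nat.factorial (a + b) - Nat.factorial a * Nat.factorial b := by
  classical
  let colour : Fin (a + b) → Bool := fun x => (finSumFinEquiv.symm x).isLeft
  have htrans_iff (σ : Perm (Fin (a + b))) :
      (∀ i j, ∃ g ∈ closure {xiab a b, σ}, g i = j) ↔ ¬colour ∘ σ = colour :=
    Perm.forall_exists_mem_closure_pair_apply_eq_iff (fun _ _ => sameCycle_xiab_iff)
      (surjective_isLeft_finSumFinEquiv_symm ha hb)
  rw [Nat.card_congr (subtypeEquivRight htrans_iff), Nat.card_eq_fintype_card,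
    Fintype.card_subtype_compl, Perm.card_comp_eq_self, Fintype.card_perm, Fintype.card_fin,
    card_isLeft_finSumFinEquiv_symm_eq_true, card_isLeft_finSumFinEquiv_symm_eq_false]
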